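/- Let G be a Polish group. Then: (1) the space 𝓛(G) of one-parameter subgroups of G, with the topology inherited from the compact-open topology on continuous functions ℝ → G, is a Polish space; (2) the map ℝ × 𝓛(G) → 𝓛(G), (r, X) ↦ rX where (rX)(t) = X(rt), is a continuous action of ℝ on 𝓛(G); (3) the evaluation map e : 𝓛(G) → G given by e(X) = X(1) is continuous. -/

import Mathlib

/-!
Since `ℝ` is locally compact and σ-compact, `C(ℝ, G)` is Polish for Polish `G`, and the
homomorphism identities `X (s + t) = X s * X t` cut out a closed subset of it. The action is
continuous because `((r, X), t) ↦ X (r * t)` is, evaluation `C(ℝ, G) × ℝ → G` being jointly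
continuous for locally compact `ℝ`.
-/

noncomputable section

open Topology Set

/-- The space `𝓛(G)` of one-parameter subgroups of `G`, i.e. continuous homomorphisms
`ℝ → G`, as a subspace of `C(ℝ, G)` with the compact-open topology. -/
def OneParam (G : Type*) [TopologicalSpace G] [Group G] : Set C(ℝ, G) :=
  {X | ∀ s t : ℝ, X (s + t) = X s * X t}

/-- The scalar action of `ℝ` on `𝓛(G)`: `(rX)(t) = X(rt)`. -/
def oneParamSMul (G : Type*) [TopologicalSpace G] [Group G] (r : ℝ) (X : OneParam G) :
    OneParam G :=
  ⟨X.1.comp ⟨fun t => r * t, by fun_prop⟩, fun s t => by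
    simp only [ContinuousMap.comp_apply, ContinuousMap.coe_mk]
    rw [mul_add]
    exact X.2 _ _⟩

/-- The evaluation map `e : 𝓛(G) → G`, `e(X) = X(1)`. -/
def oneParamEval (G : Type*) [TopologicalSpace G] [Group G] (X : OneParam G) : G := X.1 1

section

variable (G : Type*) [TopologicalSpace G] [Group G]

theorem isClosed_oneParam [ContinuousMul G] [T2Space G] : IsClosed (OneParam G) := by
  simp only [OneParam, ofPred_forall]
  exact isClosed_iInter fun s => isClosed_iInter fun t =>
    isClosed_eq (continuous_eval_const _)
      ((continuous_eval_const s).mul (continuous_eval_const t))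

theorem polishSpace_oneParam [ContinuousMul G] [PolishSpace G] : PolishSpace (OneParam G) := by
  let := TopologicalSpace.upgradeIsCompletelyMetrizable G
  exact (isClosed_oneParam G).polishSpace

theorem continuous_oneParamSMul :
    Continuous fun p : ℝ × OneParam G => oneParamSMul G p.1 p.2 := by
  refine Continuous.subtype_mk (ContinuousMap.continuous_of_continuous_uncurry _ ?_) _
  exact continuous_eval.comp <| (continuous_subtype_val.comp continuous_fst.snd).prodMk
    (continuous_fst.fst.mul continuous_snd)

theorem oneParamSMul_one (X : OneParam G) : oneParamSMul G 1 X = X := by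
  ext t
  exact congrArg X.1 (one_mul t)

theorem oneParamSMul_mul (r s : ℝ) (X : OneParam G) :
    oneParamSMul G (r * s) X = oneParamSMul G r (oneParamSMul G s X) := by
  ext t
  show X.1 (r * s * t) = X.1 (s * (r * t))
  rw [mul_comm r s, mul_assoc]

theorem continuous_oneParamEval : Continuous (oneParamEval G) :=
  (continuous_eval_const 1).comp continuous_subtype_val

end

/-- For a Polish group `G`: (1) the space `𝓛(G)` of one-parameter subgroups with the
compact-open topology is Polish; (2) `(r, X) ↦ rX`, `(rX)(t) = X(rt)`, is a continuous action
of `ℝ` on `𝓛(G)`; (3) the evaluation `e(X) = X(1)` is continuous. -/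
theorem oneParam_polish_continuous_action_eval (G : Type*) [TopologicalSpace G] [Group G]
    [IsTopologicalGroup G] [PolishSpace G] :
    PolishSpace (OneParam G) ∧
    (Continuous (fun p : ℝ × OneParam G => oneParamSMul G p.1 p.2) ∧
      (∀ X : OneParam G, oneParamSMul G 1 X = X) ∧
      (∀ (r s : ℝ) (X : OneParam G),
        oneParamSMul G (r * s) X = oneParamSMul G r (oneParamSMul G s X))) ∧
    Continuous (oneParamEval G) :=
  ⟨polishSpace_oneParam G,
    ⟨continuous_oneParamSMul G, oneParamSMul_one G, oneParamSMul_mul G⟩,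
    continuous_oneParamEval G⟩

end
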